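/- For a unit interval order U with G = inc(U), every directed path in the grid Γ_G is uniquely determined by its weight, and the weight of any path is a product over a strictly increasing chain (with respect to ≻) of elements of U; in particular no two incomparable elements of U can both appear in the weight of a single path. -/

import Mathlib

/-!
Every edge of `Γ_G` strictly increases the second coordinate `j` (the row of `diagRows`), since
`j < next(j)`. After a diagonal step from row `j` the path is in row `next(j)`, and every later
diagonal step starts in a row `≥ next(j)`, whose value is `≥ v_j + 1`; hence the weight is a
`≻`-chain. Conversely, the first step from `(i, j)` is diagonal exactly when `j` occurs in the
weight, because all later diagonal steps start in rows `> j`; so start, end and weight determine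
the path step by step.
-/

/-- `nxt n v i` is the least 0-based index `j < n` with `v i + 1 ≤ v j`, or `n`
if none exists (the paper's `next`). -/
noncomputable def nxt (n : ℕ) (v : ℕ → ℝ) (i : ℕ) : ℕ :=
  sInf {j : ℕ | (j < n ∧ v i + 1 ≤ v j) ∨ j = n}

/-- Edge relation of the grid `Γ_G` (0-based rows `0, ..., n`): from `(i, j)`
with `j < n`, edges to `(i, j+1)` (weight 1) and to `(i+1, nxt j)`
(weight `v_j`). -/
def gstep (n : ℕ) (nxt : ℕ → ℕ) (p q : ℕ × ℕ) : Prop :=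
  p.2 < n ∧ (q = (p.1, p.2 + 1) ∨ q = (p.1 + 1, nxt p.2))

/-- The list of rows at which a grid path takes a diagonal step; the weight of
the path is the product of the elements `v_j` over this list. -/
def diagRows (l : List (ℕ × ℕ)) : List ℕ :=
  (l.zip l.tail).filterMap fun p =>
    if p.2.1 = p.1.1 + 1 then some p.1.2 else none

lemma nxt_spec (n : ℕ) (v : ℕ → ℝ) (j : ℕ) :
    (nxt n v j < n ∧ v j + 1 ≤ v (nxt n v j)) ∨ nxt n v j = n :=
  Nat.sInf_mem (s := {k | (k < n ∧ v j + 1 ≤ v k) ∨ k = n}) ⟨n, Or.inr rfl⟩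

lemma lt_nxt {n : ℕ} {v : ℕ → ℝ} (hv : StrictMonoOn v (Set.Iio n)) {j : ℕ} (hj : j < n) :
    j < nxt n v j := by
  rcases nxt_spec n v j with ⟨hlt, hle⟩ | heq
  · by_contra! h
    have := (hv.le_iff_le hlt hj).2 h
    linarith
  · omega

lemma add_one_le_of_nxt_le {n : ℕ} {v : ℕ → ℝ} (hv : MonotoneOn v (Set.Iio n)) {j b : ℕ}
    (hjb : nxt n v j ≤ b) (hb : b < n) : v j + 1 ≤ v b := by
  rcases nxt_spec n v j with ⟨hlt, hle⟩ | heq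
  · exact hle.trans (hv hlt hb hjb)
  · omega

section gstep

variable {n : ℕ} {f : ℕ → ℕ} {p q q' : ℕ × ℕ}

lemma gstep.snd_lt (hf : ∀ j < n, j < f j) (h : gstep n f p q) : p.2 < q.2 := by
  obtain ⟨hp, rfl | rfl⟩ := h
  · exact Nat.lt_succ_self _
  · exact hf _ hp

lemma gstep.snd_eq_of_fst_eq_add_one (h : gstep n f p q) (hq : q.1 = p.1 + 1) :
    q.2 = f p.2 := by
  obtain ⟨-, rfl | rfl⟩ := h
  · simp at hq
  · rfl

lemma gstep.eq_of_fst_eq_add_one_iff (h : gstep n f p q) (h' : gstep n f p q')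
    (hq : q.1 = p.1 + 1 ↔ q'.1 = p.1 + 1) : q = q' := by
  obtain ⟨-, rfl | rfl⟩ := h <;> obtain ⟨-, rfl | rfl⟩ := h' <;> simp_all

lemma isChain_gstep_pairwise (hf : ∀ j < n, j < f j) {l : List (ℕ × ℕ)}
    (hl : l.IsChain (gstep n f)) : l.Pairwise (fun p q => p.2 < q.2) :=
  List.pairwise_map.mp ((List.isChain_map Prod.snd).mpr (hl.imp fun _ _ h => h.snd_lt hf)).pairwise

end gstep

section diagRows

variable {n : ℕ} {f : ℕ → ℕ} {p q : ℕ × ℕ} {r : List (ℕ × ℕ)}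

lemma diagRows_cons_cons_of_fst_eq (h : q.1 = p.1 + 1) :
    diagRows (p :: q :: r) = p.2 :: diagRows (q :: r) := by
  simp [diagRows, h]

lemma diagRows_cons_cons_of_fst_ne (h : q.1 ≠ p.1 + 1) :
    diagRows (p :: q :: r) = diagRows (q :: r) := by
  simp [diagRows, h]

lemma snd_le_and_lt_of_mem_diagRows (hf : ∀ j < n, j < f j) :
    ∀ {q : ℕ × ℕ} {r : List (ℕ × ℕ)}, (q :: r).IsChain (gstep n f) →
      ∀ a ∈ diagRows (q :: r), q.2 ≤ a ∧ a < n
  | _, [], _, _, ha => by simp [diagRows] at ha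
  | q, q' :: r, hl, a, ha => by
    obtain ⟨hqq', hl'⟩ := List.isChain_cons_cons.mp hl
    have ih := snd_le_and_lt_of_mem_diagRows hf hl' a
    have hlt := hqq'.snd_lt hf
    by_cases hd : q'.1 = q.1 + 1
    · rw [diagRows_cons_cons_of_fst_eq hd, List.mem_cons] at ha
      rcases ha with rfl | ha
      · exact ⟨le_rfl, hqq'.1⟩
      · exact (ih ha).imp_left hlt.le.trans
    · rw [diagRows_cons_cons_of_fst_ne hd] at ha
      exact (ih ha).imp_left hlt.le.trans

lemma fst_eq_add_one_iff_mem_diagRows (hf : ∀ j < n, j < f j)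
    (hl : (p :: q :: r).IsChain (gstep n f)) :
    q.1 = p.1 + 1 ↔ p.2 ∈ diagRows (p :: q :: r) := by
  obtain ⟨hpq, hl'⟩ := List.isChain_cons_cons.mp hl
  have hnot : p.2 ∉ diagRows (q :: r) := fun h =>
    absurd (snd_le_and_lt_of_mem_diagRows hf hl' _ h).1 (not_le.mpr (hpq.snd_lt hf))
  by_cases hd : q.1 = p.1 + 1
  · simp [diagRows_cons_cons_of_fst_eq hd, hd]
  · simp [diagRows_cons_cons_of_fst_ne hd, hd, hnot]

end diagRows

lemma isChain_diagRows {n : ℕ} {v : ℕ → ℝ} (hv : StrictMonoOn v (Set.Iio n)) :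
    ∀ {l : List (ℕ × ℕ)}, l.IsChain (gstep n (nxt n v)) →
      (diagRows l).IsChain (fun a b => v a + 1 ≤ v b)
  | [], _ => .nil
  | [_], _ => .nil
  | p :: q :: r, hl => by
    obtain ⟨hpq, hl'⟩ := List.isChain_cons_cons.mp hl
    have ih := isChain_diagRows hv hl'
    by_cases hd : q.1 = p.1 + 1
    · rw [diagRows_cons_cons_of_fst_eq hd]
      refine ih.cons fun b hb => ?_
      obtain ⟨hqb, hbn⟩ :=
        snd_le_and_lt_of_mem_diagRows (fun _ => lt_nxt hv) hl' b (List.mem_of_mem_head? hb)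
      rw [hpq.snd_eq_of_fst_eq_add_one hd] at hqb
      exact add_one_le_of_nxt_le hv.monotoneOn hqb hbn
    · rwa [diagRows_cons_cons_of_fst_ne hd]

lemma one_le_abs_sub_of_isChain {α : Type*} {v : α → ℝ} {l : List α}
    (hl : l.IsChain (fun a b => v a + 1 ≤ v b)) :
    ∀ a ∈ l, ∀ b ∈ l, a ≠ b → 1 ≤ |v a - v b| := by
  have : Trans (fun a b => v a + 1 ≤ v b) (fun a b => v a + 1 ≤ v b)
      (fun a b => v a + 1 ≤ v b) := ⟨fun hab hbc => by linarith⟩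
  have : Std.Symm (fun a b => 1 ≤ |v a - v b|) := ⟨fun a b h => by rwa [abs_sub_comm]⟩
  have hsep : l.Pairwise (fun a b => 1 ≤ |v a - v b|) :=
    hl.pairwise.imp fun h => by rw [abs_sub_comm, abs_of_nonneg (by linarith)]; linarith
  exact fun a ha b hb hab => hsep.forall ha hb hab

section uniqueness

variable {n : ℕ} {f : ℕ → ℕ}

lemma getLast?_ne_head (hf : ∀ j < n, j < f j) {p q : ℕ × ℕ} {r : List (ℕ × ℕ)}
    (hl : (p :: q :: r).IsChain (gstep n f)) : (q :: r).getLast? ≠ some p := fun h =>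
  lt_irrefl _ (List.rel_of_pairwise_cons (isChain_gstep_pairwise hf hl) (List.mem_of_getLast? h))

lemma eq_of_isChain_of_perm_diagRows (hf : ∀ j < n, j < f j) :
    ∀ {p : ℕ × ℕ} {t t' : List (ℕ × ℕ)}, (p :: t).IsChain (gstep n f) →
      (p :: t').IsChain (gstep n f) → (p :: t).getLast? = (p :: t').getLast? →
      (diagRows (p :: t)).Perm (diagRows (p :: t')) → t = t'
  | _, [], [], _, _, _, _ => rfl
  | _, [], _ :: _, _, hl', hlast, _ =>
    (getLast?_ne_head hf hl' (List.getLast?_cons_cons.symm.trans hlast.symm)).elim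
  | _, _ :: _, [], hl, _, hlast, _ =>
    (getLast?_ne_head hf hl (List.getLast?_cons_cons.symm.trans hlast)).elim
  | p, q :: r, q' :: r', hl, hl', hlast, hperm => by
    obtain ⟨hpq, hqr⟩ := List.isChain_cons_cons.mp hl
    obtain ⟨hpq', hqr'⟩ := List.isChain_cons_cons.mp hl'
    -- whether the first step is diagonal is read off from whether `p.2` occurs in the weight
    obtain rfl : q = q' := hpq.eq_of_fst_eq_add_one_iff hpq' <|
      (fst_eq_add_one_iff_mem_diagRows hf hl).trans
        (hperm.mem_iff.trans (fst_eq_add_one_iff_mem_diagRows hf hl').symm)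
    have htail : (diagRows (q :: r)).Perm (diagRows (q :: r')) := by
      by_cases hd : q.1 = p.1 + 1
      · simp only [diagRows_cons_cons_of_fst_eq hd] at hperm
        exact hperm.cons_inv
      · simpa only [diagRows_cons_cons_of_fst_ne hd] using hperm
    rw [eq_of_isChain_of_perm_diagRows hf hqr hqr'
      (by simpa only [List.getLast?_cons_cons] using hlast) htail]

end uniqueness

/-- in the grid `Γ_G` of a unit interval order
`U = {v 0 < ⋯ < v (n−1)}`, the weight of any directed path is a product over a
strictly `≻`-increasing chain of elements of `U` (in particular no two
incomparable elements both occur in it), and a path is uniquely determined by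
its endpoints together with its weight. -/
theorem stmt17 (n : ℕ) (v : ℕ → ℝ)
    (hv : ∀ a b : ℕ, a < b → b < n → v a < v b)
    (l : List (ℕ × ℕ)) (hl : l.Chain' (gstep n (nxt n v))) :
    (diagRows l).Chain' (fun a b => v a + 1 ≤ v b) ∧
    (∀ a ∈ diagRows l, ∀ b ∈ diagRows l, a ≠ b → 1 ≤ |v a - v b|) ∧
    (∀ l' : List (ℕ × ℕ), l'.Chain' (gstep n (nxt n v)) →
      l.head? = l'.head? → l.getLast? = l'.getLast? →
      (diagRows l : Multiset ℕ) = (diagRows l' : Multiset ℕ) → l = l') := by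
  have hmono : StrictMonoOn v (Set.Iio n) := fun a _ b hb hab => hv a b hab hb
  have hchain := isChain_diagRows hmono hl
  refine ⟨hchain, one_le_abs_sub_of_isChain hchain, fun l' hl' hhead hlast hweight => ?_⟩
  match l, l', hhead with
  | [], [], _ => rfl
  | p :: t, p' :: t', hhead =>
    obtain rfl : p = p' := Option.some.inj hhead
    rw [eq_of_isChain_of_perm_diagRows (fun _ => lt_nxt hmono) hl hl' hlast
      (Multiset.coe_eq_coe.mp hweight)]
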